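/- arXiv:1411.0846 — 5 statements merged into one kernel-verified Lean document; each statement's English description precedes it below -/
import Mathlib

section
/- For every real r > 0 one has 0 < (r·cosh r − sinh r)/(sinh r)^3 ≤ 1/3, the supremum over r > 0 of (r·cosh r − sinh r)/(sinh r)^3 equals 1/3 (attained in the limit r → 0), and the infimum equals 0. -/
/-!
Both inequalities are monotonicity arguments on `[0, ∞)`: `r cosh r - sinh r` has derivative
`r sinh r > 0`, and `sinh³ r - 3 (r cosh r - sinh r)` has derivative
`3 sinh r (sinh r cosh r - r) ≥ 0`, both functions vanishing at `0`. By l'Hôpital the quotient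
tends to `1/3` as `r → 0⁺`, and since it is at most `2 / r` for `r ≥ 1` it tends to `0` at
infinity. A bound on the values that is also a limit of them is their supremum (infimum).
-/

open Real Set Filter Topology

section ImageBounds

variable {α β : Type*} [ConditionallyCompleteLinearOrder β] [TopologicalSpace β]
  [OrderTopology β] {f : α → β} {s : Set α} {l : Filter α} [l.NeBot] {a : β}

theorem csSup_image_eq_of_tendsto (hle : ∀ x ∈ s, f x ≤ a) (hs : ∀ᶠ x in l, x ∈ s)
    (hf : Tendsto f l (𝓝 a)) : sSup (f '' s) = a :=
  (isLUB_of_mem_closure (forall_mem_image.2 hle)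
    (mem_closure_of_tendsto hf (hs.mono fun _ ↦ mem_image_of_mem f))).csSup_eq
    (Nonempty.image f hs.exists)

theorem csInf_image_eq_of_tendsto (hle : ∀ x ∈ s, a ≤ f x) (hs : ∀ᶠ x in l, x ∈ s)
    (hf : Tendsto f l (𝓝 a)) : sInf (f '' s) = a :=
  csSup_image_eq_of_tendsto (β := βᵒᵈ) hle hs hf

end ImageBounds

namespace Real

theorem hasDerivAt_mul_cosh_sub_sinh (x : ℝ) :
    HasDerivAt (fun x ↦ x * cosh x - sinh x) (x * sinh x) x :=
  (((hasDerivAt_id x).mul (hasDerivAt_cosh x)).sub (hasDerivAt_sinh x)).congr_deriv (by simp)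

theorem mul_cosh_sub_sinh_pos {r : ℝ} (hr : 0 < r) : 0 < r * cosh r - sinh r := by
  have hmono : StrictMonoOn (fun x ↦ x * cosh x - sinh x) (Ici 0) :=
    strictMonoOn_of_deriv_pos (convex_Ici 0) (by fun_prop) fun x hx ↦ by
      rw [interior_Ici] at hx
      rw [(hasDerivAt_mul_cosh_sub_sinh x).deriv]
      exact mul_pos hx (sinh_pos_iff.2 hx)
  simpa using hmono self_mem_Ici hr.le hr

theorem three_mul_mul_cosh_sub_sinh_le_sinh_pow_three {r : ℝ} (hr : 0 ≤ r) :
    3 * (r * cosh r - sinh r) ≤ sinh r ^ 3 := by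
  have hderiv (x : ℝ) : HasDerivAt (fun x ↦ sinh x ^ 3 - 3 * (x * cosh x - sinh x))
      (3 * sinh x * (sinh x * cosh x - x)) x := by
    refine (((hasDerivAt_sinh x).pow 3).sub
      ((hasDerivAt_mul_cosh_sub_sinh x).const_mul 3)).congr_deriv ?_
    norm_num
    ring
  have hmono : MonotoneOn (fun x ↦ sinh x ^ 3 - 3 * (x * cosh x - sinh x)) (Ici 0) :=
    monotoneOn_of_deriv_nonneg (convex_Ici 0) (by fun_prop)
      (fun x _ ↦ (hderiv x).differentiableAt.differentiableWithinAt) fun x hx ↦ by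
      rw [interior_Ici] at hx
      rw [(hderiv x).deriv]
      have : x ≤ sinh x * cosh x := by
        have := self_le_sinh_iff.2 (by linarith [mem_Ioi.1 hx] : (0 : ℝ) ≤ 2 * x)
        rw [sinh_two_mul] at this
        linarith
      have := (sinh_pos_iff.2 hx).le
      positivity
  simpa using hmono self_mem_Ici hr hr

theorem mul_cosh_sub_sinh_div_sinh_pow_three_pos {r : ℝ} (hr : 0 < r) :
    0 < (r * cosh r - sinh r) / sinh r ^ 3 :=
  div_pos (mul_cosh_sub_sinh_pos hr) (pow_pos (sinh_pos_iff.2 hr) 3)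

theorem mul_cosh_sub_sinh_div_sinh_pow_three_le_one_div_three {r : ℝ} (hr : 0 ≤ r) :
    (r * cosh r - sinh r) / sinh r ^ 3 ≤ 1 / 3 :=
  div_le_of_le_mul₀ (pow_nonneg (sinh_nonneg_iff.2 hr) 3) (by norm_num)
    (by linarith [three_mul_mul_cosh_sub_sinh_le_sinh_pow_three hr])

theorem tendsto_self_div_sinh_nhdsNE_zero :
    Tendsto (fun x ↦ x / sinh x) (𝓝[≠] 0) (𝓝 1) := by
  have := ((hasDerivAt_sinh 0).tendsto_slope_zero).inv₀ (by simp)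
  simpa [div_eq_inv_mul] using this

theorem tendsto_mul_cosh_sub_sinh_div_sinh_pow_three_nhdsGT_zero :
    Tendsto (fun r ↦ (r * cosh r - sinh r) / sinh r ^ 3) (𝓝[>] 0) (𝓝 (1 / 3)) := by
  have hnum : Tendsto (fun r ↦ r * cosh r - sinh r) (𝓝[>] 0) (𝓝 0) := by
    simpa using ((by fun_prop : Continuous fun r : ℝ ↦ r * cosh r - sinh r).tendsto 0).mono_left
      nhdsWithin_le_nhds
  have hden : Tendsto (fun r ↦ sinh r ^ 3) (𝓝[>] 0) (𝓝 0) := by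
    simpa using ((by fun_prop : Continuous fun r ↦ sinh r ^ 3).tendsto 0).mono_left
      nhdsWithin_le_nhds
  -- l'Hôpital: the quotient of derivatives is `(1 / 3) * (r / sinh r) / cosh r`
  have hdiv : Tendsto (fun r ↦ r * sinh r / (3 * sinh r ^ 2 * cosh r)) (𝓝[>] 0)
      (𝓝 (1 / 3)) := by
    have h := (((tendsto_self_div_sinh_nhdsNE_zero.mono_left (nhdsGT_le_nhdsNE 0)).div
      ((continuous_cosh.tendsto 0).mono_left nhdsWithin_le_nhds) (by simp)).const_mul (1 / 3))
    rw [cosh_zero, div_one, mul_one] at h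
    refine h.congr' ?_
    filter_upwards [self_mem_nhdsWithin] with r hr
    have := sinh_pos_iff.2 hr
    have := cosh_pos r
    simp only [Pi.div_apply]
    field_simp
  refine HasDerivAt.lhopital_zero_nhdsGT (.of_forall hasDerivAt_mul_cosh_sub_sinh)
    (.of_forall fun x ↦ ((hasDerivAt_sinh x).pow 3).congr_deriv (by norm_num)) ?_ hnum hden hdiv
  filter_upwards [self_mem_nhdsWithin] with r hr
  have := sinh_pos_iff.2 hr
  have := cosh_pos r
  positivity

theorem mul_cosh_sub_sinh_div_sinh_pow_three_le_two_div {r : ℝ} (hr : 1 ≤ r) :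
    (r * cosh r - sinh r) / sinh r ^ 3 ≤ 2 / r := by
  have hr₀ : 0 < r := by linarith
  have hsinh : r < sinh r := self_lt_sinh_iff.2 hr₀
  have hcosh : cosh r ≤ 2 * sinh r := by
    have := cosh_sub_sinh r
    have := exp_le_one_iff.2 (neg_nonpos.2 hr₀.le)
    linarith
  calc (r * cosh r - sinh r) / sinh r ^ 3 ≤ 2 * r * sinh r / sinh r ^ 3 := by
        gcongr
        nlinarith
    _ = 2 * r / sinh r ^ 2 := by field_simp
    _ ≤ 2 * r / r ^ 2 := by gcongr
    _ = 2 / r := by field_simp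

theorem tendsto_mul_cosh_sub_sinh_div_sinh_pow_three_atTop :
    Tendsto (fun r ↦ (r * cosh r - sinh r) / sinh r ^ 3) atTop (𝓝 0) := by
  refine tendsto_of_tendsto_of_tendsto_of_le_of_le' tendsto_const_nhds
    (tendsto_const_nhds.div_atTop tendsto_id : Tendsto (fun r : ℝ ↦ 2 / r) atTop (𝓝 0)) ?_ ?_
  · filter_upwards [eventually_gt_atTop 0] with r hr
    exact (mul_cosh_sub_sinh_div_sinh_pow_three_pos hr).le
  · filter_upwards [eventually_ge_atTop 1] with r hr
    exact mul_cosh_sub_sinh_div_sinh_pow_three_le_two_div hr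

end Real

theorem stmt_1 :
    (∀ r : ℝ, 0 < r →
      0 < (r * Real.cosh r - Real.sinh r) / (Real.sinh r) ^ 3 ∧
      (r * Real.cosh r - Real.sinh r) / (Real.sinh r) ^ 3 ≤ 1 / 3) ∧
    sSup ((fun r : ℝ => (r * Real.cosh r - Real.sinh r) / (Real.sinh r) ^ 3) '' Set.Ioi 0)
      = 1 / 3 ∧
    Filter.Tendsto (fun r : ℝ => (r * Real.cosh r - Real.sinh r) / (Real.sinh r) ^ 3)
      (nhdsWithin 0 (Set.Ioi 0)) (nhds (1 / 3)) ∧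
    sInf ((fun r : ℝ => (r * Real.cosh r - Real.sinh r) / (Real.sinh r) ^ 3) '' Set.Ioi 0)
      = 0 := by
  refine ⟨fun r hr ↦ ⟨mul_cosh_sub_sinh_div_sinh_pow_three_pos hr,
      mul_cosh_sub_sinh_div_sinh_pow_three_le_one_div_three hr.le⟩, ?_,
    tendsto_mul_cosh_sub_sinh_div_sinh_pow_three_nhdsGT_zero, ?_⟩
  · exact csSup_image_eq_of_tendsto (l := 𝓝[>] 0)
      (fun r hr ↦ mul_cosh_sub_sinh_div_sinh_pow_three_le_one_div_three (le_of_lt hr))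
      self_mem_nhdsWithin tendsto_mul_cosh_sub_sinh_div_sinh_pow_three_nhdsGT_zero
  · exact csInf_image_eq_of_tendsto (l := atTop)
      (fun r hr ↦ (mul_cosh_sub_sinh_div_sinh_pow_three_pos hr).le)
      (Ioi_mem_atTop 0) tendsto_mul_cosh_sub_sinh_div_sinh_pow_three_atTop
end

section
/- For every integer n ≥ 2 and every real r ≥ 0, (2n−2)·r²·cosh²r + n·r² − (3n−4)·r·cosh r·sinh r − 2·sinh²r ≥ 0. -/
/-!
Write `c = cosh r`, `s = sinh r`. The expression is affine in `n` and equals `(n - 2) A + 2 F` with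
`A = 2 r² c² + r² - 3 r c s` and `F = r² c² + r² - r c s - s²`, so it suffices that `A, F ≥ 0`.
In terms of `t = 2 r` these are `A = (t / 4) (t cosh t + 2 t - 3 sinh t)` and
`8 F = t² cosh t + 3 t² - 2 t sinh t - 4 cosh t + 4`; both functions of `t` vanish at `0` and are
shown nonnegative by differentiating repeatedly until the derivative is visibly nonnegative.
-/

open Real

lemma nonneg_of_hasDerivAt_of_map_zero {f f' : ℝ → ℝ} (hf : ∀ x, HasDerivAt f (f' x) x)
    (h0 : f 0 = 0) (hf' : ∀ x, 0 ≤ x → 0 ≤ f' x) {r : ℝ} (hr : 0 ≤ r) : 0 ≤ f r := by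
  have hmono : MonotoneOn f (Set.Ici 0) := by
    refine monotoneOn_of_hasDerivWithinAt_nonneg (convex_Ici 0)
      (fun x _ ↦ (hf x).continuousAt.continuousWithinAt)
      (fun x _ ↦ (hf x).hasDerivWithinAt) fun x hx ↦ hf' x ?_
    rw [interior_Ici] at hx
    exact hx.le
  simpa [h0] using hmono Set.self_mem_Ici (Set.mem_Ici.2 hr) hr

namespace Real

lemma sinh_le_mul_cosh {t : ℝ} (ht : 0 ≤ t) : sinh t ≤ t * cosh t := by
  have key := nonneg_of_hasDerivAt_of_map_zero (f := fun t ↦ t * cosh t - sinh t)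
    (f' := fun t ↦ t * sinh t)
    (fun x ↦ (((hasDerivAt_id' x).mul (hasDerivAt_cosh x)).sub (hasDerivAt_sinh x)).congr_deriv
      (by ring))
    (by simp) (fun x hx ↦ mul_nonneg hx (sinh_nonneg_iff.2 hx)) ht
  linarith

lemma two_mul_cosh_le_mul_sinh_add_two {t : ℝ} (ht : 0 ≤ t) :
    2 * cosh t ≤ t * sinh t + 2 := by
  have key := nonneg_of_hasDerivAt_of_map_zero (f := fun t ↦ t * sinh t + 2 - 2 * cosh t)
    (f' := fun t ↦ t * cosh t - sinh t)
    (fun x ↦ ((((hasDerivAt_id' x).mul (hasDerivAt_sinh x)).add_const 2).sub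
        ((hasDerivAt_cosh x).const_mul 2)).congr_deriv (by ring))
    (by simp) (fun x hx ↦ sub_nonneg.2 (sinh_le_mul_cosh hx)) ht
  linarith

lemma three_mul_sinh_le {t : ℝ} (ht : 0 ≤ t) : 3 * sinh t ≤ t * cosh t + 2 * t := by
  have key := nonneg_of_hasDerivAt_of_map_zero (f := fun t ↦ t * cosh t + 2 * t - 3 * sinh t)
    (f' := fun t ↦ t * sinh t + 2 - 2 * cosh t)
    (fun x ↦ ((((hasDerivAt_id' x).mul (hasDerivAt_cosh x)).add
        ((hasDerivAt_id' x).const_mul 2)).sub ((hasDerivAt_sinh x).const_mul 3)).congr_deriv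
      (by ring))
    (by simp) (fun x hx ↦ sub_nonneg.2 (two_mul_cosh_le_mul_sinh_add_two hx)) ht
  linarith

lemma six_mul_cosh_le {t : ℝ} (ht : 0 ≤ t) :
    6 * cosh t ≤ t ^ 2 * cosh t + 2 * t * sinh t + 6 := by
  have key := nonneg_of_hasDerivAt_of_map_zero
    (f := fun t ↦ t ^ 2 * cosh t + 2 * t * sinh t + 6 - 6 * cosh t)
    (f' := fun t ↦ t ^ 2 * sinh t + 4 * t * cosh t - 4 * sinh t)
    (fun x ↦ (((((hasDerivAt_pow 2 x).mul (hasDerivAt_cosh x)).add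
        (((hasDerivAt_id' x).const_mul 2).mul (hasDerivAt_sinh x))).add_const 6).sub
        ((hasDerivAt_cosh x).const_mul 6)).congr_deriv (by ring))
    (by simp)
    (fun x hx ↦ by
      linarith [sinh_le_mul_cosh hx, mul_nonneg (sq_nonneg x) (sinh_nonneg_iff.2 hx)]) ht
  linarith

lemma six_mul_sinh_le {t : ℝ} (ht : 0 ≤ t) : 6 * sinh t ≤ t ^ 2 * sinh t + 6 * t := by
  have key := nonneg_of_hasDerivAt_of_map_zero
    (f := fun t ↦ t ^ 2 * sinh t + 6 * t - 6 * sinh t)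
    (f' := fun t ↦ t ^ 2 * cosh t + 2 * t * sinh t + 6 - 6 * cosh t)
    (fun x ↦ ((((hasDerivAt_pow 2 x).mul (hasDerivAt_sinh x)).add
        ((hasDerivAt_id' x).const_mul 6)).sub ((hasDerivAt_sinh x).const_mul 6)).congr_deriv
      (by ring))
    (by simp) (fun x hx ↦ sub_nonneg.2 (six_mul_cosh_le hx)) ht
  linarith

lemma two_mul_mul_sinh_add_four_mul_cosh_le {t : ℝ} (ht : 0 ≤ t) :
    2 * t * sinh t + 4 * cosh t ≤ t ^ 2 * cosh t + 3 * t ^ 2 + 4 := by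
  have key := nonneg_of_hasDerivAt_of_map_zero
    (f := fun t ↦ t ^ 2 * cosh t + 3 * t ^ 2 + 4 - 2 * t * sinh t - 4 * cosh t)
    (f' := fun t ↦ t ^ 2 * sinh t + 6 * t - 6 * sinh t)
    (fun x ↦ ((((((hasDerivAt_pow 2 x).mul (hasDerivAt_cosh x)).add
        ((hasDerivAt_pow 2 x).const_mul 3)).add_const 4).sub
        (((hasDerivAt_id' x).const_mul 2).mul (hasDerivAt_sinh x))).sub
        ((hasDerivAt_cosh x).const_mul 4)).congr_deriv (by ring))
    (by simp) (fun x hx ↦ sub_nonneg.2 (six_mul_sinh_le hx)) ht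
  linarith

lemma three_mul_mul_cosh_mul_sinh_le {r : ℝ} (hr : 0 ≤ r) :
    3 * r * cosh r * sinh r ≤ 2 * r ^ 2 * cosh r ^ 2 + r ^ 2 := by
  have h := three_mul_sinh_le (by positivity : 0 ≤ 2 * r)
  rw [cosh_two_mul, sinh_two_mul] at h
  linear_combination (r / 2) * h - r ^ 2 * cosh_sq_sub_sinh_sq r

lemma mul_cosh_mul_sinh_add_sinh_sq_le {r : ℝ} (hr : 0 ≤ r) :
    r * cosh r * sinh r + sinh r ^ 2 ≤ r ^ 2 * cosh r ^ 2 + r ^ 2 := by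
  have h := two_mul_mul_sinh_add_four_mul_cosh_le (by positivity : 0 ≤ 2 * r)
  rw [cosh_two_mul, sinh_two_mul] at h
  linear_combination h / 8 - (r ^ 2 + 1) / 2 * cosh_sq_sub_sinh_sq r

end Real

theorem stmt_2 (n : ℕ) (hn : 2 ≤ n) (r : ℝ) (hr : 0 ≤ r) :
    0 ≤ (2 * (n : ℝ) - 2) * r ^ 2 * (Real.cosh r) ^ 2 + (n : ℝ) * r ^ 2
        - (3 * (n : ℝ) - 4) * r * Real.cosh r * Real.sinh r - 2 * (Real.sinh r) ^ 2 := by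
  have hn' : (0 : ℝ) ≤ n - 2 := sub_nonneg.2 (by exact_mod_cast hn)
  have hA := mul_le_mul_of_nonneg_left (three_mul_mul_cosh_mul_sinh_le hr) hn'
  linear_combination hA + 2 * mul_cosh_mul_sinh_add_sinh_sq_le hr
end

section
/- Let p > 1, M > 0, E_Q = ((p−1)/(2(p+1)))·M², and suppose x ∈ [0, M²] and E ∈ ℝ satisfy x/2 − M^{1−p}·x^{(p+1)/2}/(p+1) ≤ E ≤ E_Q. Then x ≤ (E/E_Q)·M². In particular there is no x with x = M² and E < E_Q. -/
/-!
On `[0, M²]` the nonlinear term is dominated by the quadratic one: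
`x ^ ((p + 1) / 2) = x · x ^ ((p - 1) / 2) ≤ x · M ^ (p - 1)`. Hence the energy functional
`x / 2 - M ^ (1 - p) x ^ ((p + 1) / 2) / (p + 1)` is at least `x (p - 1) / (2 (p + 1)) = (x / M²) E_Q`,
so any `E` above it satisfies `x ≤ (E / E_Q) M²`.
-/

open Real

lemma Real.rpow_one_add_le_mul_rpow {x y s : ℝ} (hx : 0 ≤ x) (hxy : x ≤ y) (hs : 0 ≤ s) :
    x ^ (1 + s) ≤ x * y ^ s := by
  rw [rpow_add' hx (by linarith), rpow_one]
  gcongr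

lemma rpow_one_sub_mul_rpow_le_self {p M x : ℝ} (hp : 1 ≤ p) (hM : 0 < M) (hx0 : 0 ≤ x)
    (hxM : x ≤ M ^ 2) : M ^ (1 - p) * x ^ ((p + 1) / 2) ≤ x := by
  have hsq : (M ^ 2) ^ ((p - 1) / 2) = M ^ (p - 1) := by
    rw [← rpow_natCast, ← rpow_mul hM.le]
    norm_num
    ring_nf
  calc M ^ (1 - p) * x ^ ((p + 1) / 2)
      = M ^ (1 - p) * x ^ (1 + (p - 1) / 2) := by ring_nf
    _ ≤ M ^ (1 - p) * (x * (M ^ 2) ^ ((p - 1) / 2)) := by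
        gcongr
        exact rpow_one_add_le_mul_rpow hx0 hxM (by linarith)
    _ = x := by
        rw [hsq, mul_left_comm, ← rpow_add hM]
        norm_num

lemma mul_coeff_le_half_sub_rpow_div {p M x : ℝ} (hp : 1 ≤ p) (hM : 0 < M) (hx0 : 0 ≤ x)
    (hxM : x ≤ M ^ 2) :
    x * ((p - 1) / (2 * (p + 1))) ≤ x / 2 - M ^ (1 - p) * x ^ ((p + 1) / 2) / (p + 1) := by
  have hp1 : 0 < p + 1 := by linarith
  have hbound := rpow_one_sub_mul_rpow_le_self hp hM hx0 hxM
  calc x * ((p - 1) / (2 * (p + 1))) = x / 2 - x / (p + 1) := by field_simp; ring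
    _ ≤ _ := by gcongr

theorem stmt_6_general (p M x E : ℝ) (hp : 1 < p) (hM : 0 < M)
    (hx : x ∈ Set.Icc (0 : ℝ) (M ^ 2))
    (h1 : x / 2 - M ^ (1 - p) * x ^ ((p + 1) / 2) / (p + 1) ≤ E) :
    x ≤ (E / ((p - 1) / (2 * (p + 1)) * M ^ 2)) * M ^ 2 ∧
    (x = M ^ 2 → ¬ E < (p - 1) / (2 * (p + 1)) * M ^ 2) := by
  obtain ⟨hx0, hxM⟩ := hx
  have hE : x * ((p - 1) / (2 * (p + 1))) ≤ E :=
    (mul_coeff_le_half_sub_rpow_div hp.le hM hx0 hxM).trans h1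
  have hEQ : 0 < (p - 1) / (2 * (p + 1)) * M ^ 2 := by
    have : 0 < p - 1 := by linarith
    positivity
  refine ⟨?_, fun hxe => ?_⟩
  · rw [div_mul_eq_mul_div, le_div_iff₀ hEQ]
    calc x * ((p - 1) / (2 * (p + 1)) * M ^ 2)
        = x * ((p - 1) / (2 * (p + 1))) * M ^ 2 := by ring
      _ ≤ E * M ^ 2 := by gcongr
  · subst hxe
    exact not_lt.mpr (by linarith)

theorem stmt_6 (p M x E : ℝ) (hp : 1 < p) (hM : 0 < M)
    (hx : x ∈ Set.Icc (0 : ℝ) (M ^ 2))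
    (h1 : x / 2 - M ^ (1 - p) * x ^ ((p + 1) / 2) / (p + 1) ≤ E)
    (h2 : E ≤ (p - 1) / (2 * (p + 1)) * M ^ 2) :
    x ≤ (E / ((p - 1) / (2 * (p + 1)) * M ^ 2)) * M ^ 2 ∧
    (x = M ^ 2 → ¬ E < (p - 1) / (2 * (p + 1)) * M ^ 2) :=
  stmt_6_general p M x E hp hM hx h1
end

section
/- Let n ≥ 2 be an integer. There exists a constant C > 0 such that for all r ≥ 0, ∫₀^π (cosh r − cos θ · sinh r)^{1−n} · (sin θ)^{n−2} dθ ≤ C; that is, the spherical integral ∫_{S^{n−1}} [x, (1, ω)]^{−(n−1)} dω is bounded uniformly over x ∈ ℍⁿ. -/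
/-!
Write `a(θ) = cosh r - cos θ sinh r`. Since `a(θ)² - sin² θ = (sinh r - cos θ cosh r)²` and
`a > 0`, we have `0 ≤ sin θ ≤ a(θ)` on `[0, π]`, so the integrand is at most `a(θ)⁻¹`. This is
the Poisson kernel of the disc at radius `tanh (r / 2)`, and its integral over `[0, π]` is `π`
for every `r`, which gives the bound `C = π`.
-/

open Real

lemma Real.cos_mul_sinh_lt_cosh (θ r : ℝ) : cos θ * sinh r < cosh r := by
  have h : |cos θ * sinh r| < cosh r := by
    rw [abs_mul, abs_sinh]
    calc |cos θ| * sinh |r| ≤ 1 * sinh |r| := by gcongr; exact abs_cos_le_one θ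
      _ < cosh |r| := by rw [one_mul]; exact sinh_lt_cosh _
      _ = cosh r := cosh_abs r
  exact (le_abs_self _).trans_lt h

lemma Real.cosh_sub_cos_mul_sinh_pos (θ r : ℝ) : 0 < cosh r - cos θ * sinh r :=
  sub_pos.2 (cos_mul_sinh_lt_cosh θ r)

lemma Real.sin_le_cosh_sub_cos_mul_sinh (θ r : ℝ) : sin θ ≤ cosh r - cos θ * sinh r := by
  have hsq : (cosh r - cos θ * sinh r) ^ 2 - sin θ ^ 2 = (sinh r - cos θ * cosh r) ^ 2 := by
    linear_combination (1 - cos θ ^ 2) * cosh_sq r - sin_sq_add_cos_sq θ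
  exact (abs_le_of_sq_le_sq' (by nlinarith [sq_nonneg (sinh r - cos θ * cosh r)])
    (cosh_sub_cos_mul_sinh_pos θ r).le).2

/-- With `ρ = tanh (r / 2)` the primitive is `θ + 2 arg (1 - ρ e^{iθ})⁻¹`, which stays smooth
across `θ = π`, unlike the textbook `2 arctan (e^r tan (θ / 2))`. -/
lemma Real.hasDerivAt_poisson_primitive (r θ : ℝ) :
    HasDerivAt (fun θ => θ + 2 * arctan (sinh r * sin θ / (1 + cosh r - sinh r * cos θ)))
      (cosh r - cos θ * sinh r)⁻¹ θ := by
  have hlt := cos_mul_sinh_lt_cosh θ r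
  have hD : 0 < 1 + cosh r - sinh r * cos θ := by linarith
  have hA : cosh r - sinh r * cos θ ≠ 0 := by linarith
  have h := (((hasDerivAt_sin θ).const_mul (sinh r)).div
    (((hasDerivAt_cos θ).const_mul (sinh r)).const_sub (1 + cosh r)) hD.ne').arctan
  refine ((hasDerivAt_id θ).add (h.const_mul 2)).congr_deriv ?_
  simp only [Pi.div_apply]
  rw [div_pow, one_add_div (by positivity)]
  field_simp
  linear_combination
    (1 + cosh r - sinh r * cos θ) * (cosh_sq r - sinh r ^ 2 * sin_sq_add_cos_sq θ)

theorem Real.integral_inv_cosh_sub_cos_mul_sinh (r : ℝ) :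
    ∫ θ in (0 : ℝ)..π, (cosh r - cos θ * sinh r)⁻¹ = π := by
  have hcont : Continuous fun θ => (cosh r - cos θ * sinh r)⁻¹ :=
    (by fun_prop : Continuous fun θ => cosh r - cos θ * sinh r).inv₀
      fun θ => (cosh_sub_cos_mul_sinh_pos θ r).ne'
  rw [intervalIntegral.integral_eq_sub_of_hasDerivAt
    (fun θ _ => hasDerivAt_poisson_primitive r θ) (hcont.intervalIntegrable _ _)]
  simp

lemma rpow_one_sub_mul_pow_sub_two_le_inv {a s : ℝ} (ha : 0 < a) (hs : 0 ≤ s) (hsa : s ≤ a)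
    {n : ℕ} (hn : 2 ≤ n) : a ^ ((1 : ℝ) - n) * s ^ (n - 2) ≤ a⁻¹ := by
  obtain ⟨m, rfl⟩ := Nat.exists_eq_add_of_le' hn
  have hexp : (1 : ℝ) - ↑(m + 2) = -1 + -(m : ℝ) := by push_cast; ring
  rw [hexp, rpow_add ha, rpow_neg_one, rpow_neg ha.le, rpow_natCast, Nat.add_sub_cancel,
    mul_assoc, ← div_eq_inv_mul (s ^ m), ← div_pow]
  exact mul_le_of_le_one_right (inv_nonneg.2 ha.le)
    (pow_le_one₀ (div_nonneg hs ha.le) ((div_le_one ha).2 hsa))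

theorem stmt_7 (n : ℕ) (hn : 2 ≤ n) :
    ∃ C > 0, ∀ r : ℝ, 0 ≤ r →
      (∫ θ in (0 : ℝ)..Real.pi,
        (Real.cosh r - Real.cos θ * Real.sinh r) ^ ((1 : ℝ) - n) * (Real.sin θ) ^ (n - 2)) ≤ C := by
  refine ⟨π, pi_pos, fun r _ => ?_⟩
  have hpos := fun θ => cosh_sub_cos_mul_sinh_pos θ r
  have hcont : Continuous fun θ => cosh r - cos θ * sinh r := by fun_prop
  refine (intervalIntegral.integral_mono_on pi_pos.le ?_ ?_ fun θ hθ =>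
    rpow_one_sub_mul_pow_sub_two_le_inv (hpos θ) (sin_nonneg_of_nonneg_of_le_pi hθ.1 hθ.2)
      (sin_le_cosh_sub_cos_mul_sinh θ r) hn).trans_eq (integral_inv_cosh_sub_cos_mul_sinh r)
  · exact ((hcont.rpow_const fun θ => .inl (hpos θ).ne').mul
      (continuous_sin.pow _)).intervalIntegrable _ _
  · exact (hcont.inv₀ fun θ => (hpos θ).ne').intervalIntegrable _ _
end

section
/- Let δ > 0 and let y : I → ℝ be a twice continuously differentiable function on an open interval I containing 0, with y(t) > 0 for all t ∈ I and y''(t) ≤ −δ for all t ∈ I. Then I is bounded; more precisely, I ⊆ (T_−, T_+) with T_+ ≤ (y'(0) + √(y'(0)² + 2δ·y(0)))/δ and a symmetric bound for T_−. -/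
/-! Since `y'' ≤ -δ`, the function `y t + δ t² / 2` is concave, so it lies below its tangent at `0`:
`y t ≤ y 0 + y'(0) t - δ t² / 2`. As `y > 0` on `I`, the quadratic on the right is positive on `I`,
so `I` lies between its two roots `(y'(0) ± √(y'(0)² + 2 δ y(0))) / δ`. -/

open Set

theorem ConcaveOn.le_add_mul_sub_of_hasDerivAt {S : Set ℝ} {f : ℝ → ℝ} {f' x y : ℝ}
    (hfc : ConcaveOn ℝ S f) (hx : x ∈ S) (hy : y ∈ S) (hf : HasDerivAt f f' x) :
    f y ≤ f x + f' * (y - x) := by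
  rcases lt_trichotomy x y with hxy | rfl | hyx
  · have := hfc.slope_le_of_hasDerivAt hx hy hxy hf
    rw [slope_def_field, div_le_iff₀ (sub_pos.2 hxy)] at this
    linarith
  · simp
  · have := hfc.le_slope_of_hasDerivAt hy hx hyx hf
    rw [slope_def_field, le_div_iff₀ (sub_pos.2 hyx)] at this
    linarith

theorem concaveOn_add_mul_sq_of_deriv2_le {D : Set ℝ} (hD : Convex ℝ D) (hDo : IsOpen D)
    {y : ℝ → ℝ} {δ : ℝ} (hy : ContDiffOn ℝ 2 y D) (hy'' : ∀ t ∈ D, deriv (deriv y) t ≤ -δ) :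
    ConcaveOn ℝ D (fun t => y t + δ / 2 * t ^ 2) := by
  have hy' : DifferentiableOn ℝ (deriv y) D :=
    (hy.deriv_of_isOpen hDo (m := 1) (by norm_num)).differentiableOn one_ne_zero
  refine concaveOn_of_hasDerivWithinAt2_nonpos hD
    (hy.continuousOn.add (by fun_prop)) (f' := fun t => deriv y t + δ * t)
    (f'' := fun t => deriv (deriv y) t + δ) (fun t ht => ?_) (fun t ht => ?_) (fun t ht => ?_)
  all_goals rw [hDo.interior_eq] at ht
  · have hyt := ((hy.differentiableOn two_ne_zero).differentiableAt (hDo.mem_nhds ht)).hasDerivAt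
    exact (hyt.add ((hasDerivAt_pow 2 t).const_mul (δ / 2)) |>.congr_deriv (by ring)).hasDerivWithinAt
  · exact ((hy'.differentiableAt (hDo.mem_nhds ht)).hasDerivAt.add
      ((hasDerivAt_id t).const_mul δ) |>.congr_deriv (by simp)).hasDerivWithinAt
  · linarith [hy'' t ht]

theorem le_add_deriv_mul_sub_sub_of_deriv2_le {D : Set ℝ} (hD : Convex ℝ D) (hDo : IsOpen D)
    {y : ℝ → ℝ} {δ : ℝ} (hy : ContDiffOn ℝ 2 y D) (hy'' : ∀ t ∈ D, deriv (deriv y) t ≤ -δ)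
    {t₀ t : ℝ} (ht₀ : t₀ ∈ D) (ht : t ∈ D) :
    y t ≤ y t₀ + deriv y t₀ * (t - t₀) - δ / 2 * (t - t₀) ^ 2 := by
  have hyt₀ := ((hy.differentiableOn two_ne_zero).differentiableAt (hDo.mem_nhds ht₀)).hasDerivAt
  have := (concaveOn_add_mul_sq_of_deriv2_le hD hDo hy hy'').le_add_mul_sub_of_hasDerivAt ht₀ ht
    (hyt₀.add ((hasDerivAt_pow 2 t₀).const_mul (δ / 2)))
  linarith

theorem mem_Ioo_of_quadratic_pos {δ c v t : ℝ} (hδ : 0 < δ) (h : 0 < c + v * t - δ / 2 * t ^ 2) :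
    t ∈ Ioo ((v - √(v ^ 2 + 2 * δ * c)) / δ) ((v + √(v ^ 2 + 2 * δ * c)) / δ) := by
  have hsq : (δ * t - v) ^ 2 < v ^ 2 + 2 * δ * c := by nlinarith
  have h₁ := Real.lt_sqrt_of_sq_lt hsq
  have h₂ : v - δ * t < √(v ^ 2 + 2 * δ * c) := Real.lt_sqrt_of_sq_lt (by linarith)
  constructor
  · rw [div_lt_iff₀ hδ]; linarith
  · rw [lt_div_iff₀ hδ]; linarith

theorem stmt_14 (δ : ℝ) (hδ : 0 < δ) (a b : ℝ) (ha : a < 0) (hb : 0 < b)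
    (y : ℝ → ℝ) (hy : ContDiffOn ℝ 2 y (Set.Ioo a b))
    (hpos : ∀ t ∈ Set.Ioo a b, 0 < y t)
    (hconc : ∀ t ∈ Set.Ioo a b, deriv (deriv y) t ≤ -δ) :
    b ≤ (deriv y 0 + Real.sqrt ((deriv y 0) ^ 2 + 2 * δ * y 0)) / δ ∧
    -((-(deriv y 0) + Real.sqrt ((deriv y 0) ^ 2 + 2 * δ * y 0)) / δ) ≤ a := by
  have h₀ : (0 : ℝ) ∈ Ioo a b := ⟨ha, hb⟩
  have hsub : Ioo a b ⊆ Ioo ((deriv y 0 - √(deriv y 0 ^ 2 + 2 * δ * y 0)) / δ)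
      ((deriv y 0 + √(deriv y 0 ^ 2 + 2 * δ * y 0)) / δ) := fun t ht => by
    refine mem_Ioo_of_quadratic_pos hδ ?_
    have := le_add_deriv_mul_sub_sub_of_deriv2_le (convex_Ioo a b) isOpen_Ioo hy hconc h₀ ht
    rw [sub_zero] at this
    linarith [hpos t ht]
  rw [Ioo_subset_Ioo_iff (ha.trans hb)] at hsub
  exact ⟨hsub.2, le_of_eq_of_le (by ring) hsub.1⟩
end
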